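/- The K axiom holds in base-extension semantics for S5: K_a(φ→ψ) ⊩ K_aφ → K_aψ, i.e., at every base ℬ and set of S5-modal relations 𝔯_A, if K_a(φ→ψ) is valid at ℬ then K_aφ → K_aψ is valid at ℬ. -/

import Mathlib

/-- A base rule: a finite set of premiss atoms and a conclusion atom. -/
abbrev Rule := Finset ℕ × ℕ

/-- A base is a collection of base rules. -/
abbrev Base := Set Rule

/-- Derivability of an atom in a base: closure of ∅ under the rules. -/
inductive Deriv (B : Base) : ℕ → Prop where
  | step (L : Finset ℕ) (p : ℕ) (mem : (L, p) ∈ B)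
      (prem : ∀ q ∈ L, Deriv B q) : Deriv B p

/-- A base is inconsistent iff every atom is derivable in it. -/
def Inconsistent (B : Base) : Prop := ∀ p : ℕ, Deriv B p

/-- Formulae of the multi-agent modal language over agents `A`. -/
inductive Form (A : Type) where
  | atom : ℕ → Form A
  | bot  : Form A
  | imp  : Form A → Form A → Form A
  | K    : A → Form A → Form A

/-- Negation abbreviation ¬φ := φ → ⊥. -/
def Form.neg {A : Type} (φ : Form A) : Form A := Form.imp φ Form.bot

/-- Validity at a base given a family of relations on bases. -/
def Valid {A : Type} (R : A → Base → Base → Prop) : Base → Form A → Prop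
  | B, .atom p => Deriv B p
  | B, .bot => ∀ p : ℕ, Deriv B p
  | B, .imp φ ψ => ∀ C : Base, B ⊆ C → Valid R C φ → Valid R C ψ
  | B, .K a φ => ∀ C : Base, R a B C → Valid R C φ

/-- Validity of φ at ℬ from a (nonempty) set of assumptions Γ. -/
def GammaValid {A : Type} (R : A → Base → Base → Prop)
    (Γ : Set (Form A)) (B : Base) (φ : Form A) : Prop :=
  ∀ C : Base, B ⊆ C → (∀ ψ ∈ Γ, Valid R C ψ) → Valid R C φ

def Euclidean {X : Sort*} (r : X → X → Prop) : Prop :=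
  ∀ x y z, r x y → r x z → r y z

/-- S5-modal relations on bases. -/
structure S5Rel (r : Base → Base → Prop) : Prop where
  incon_succ : ∀ B, Inconsistent B →
    (∃ C, r B C ∧ Inconsistent C) ∧ ∀ D, r B D → Inconsistent D
  con_succ : ∀ B, ¬ Inconsistent B → ∀ C, r B C → ¬ Inconsistent C
  zig : ∀ B C, r B C → ∀ D, B ⊆ D → ¬ Inconsistent D → ∃ E, C ⊆ E ∧ r D E
  zag : ∀ B C, r B C → ¬ Inconsistent C → ∀ D, D ⊆ B → ∃ E, E ⊆ C ∧ r D E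
  refl : ∀ B, r B B
  trans : ∀ B C D, r B C → r C D → r B D
  eucl : ∀ B C D, r B C → r B D → r C D

/-- Maximally-consistent bases. -/
def MaxCon (B : Base) : Prop :=
  ¬ Inconsistent B ∧ ∀ δ : Rule, δ ∈ B ∨ Inconsistent (insert δ B)

/-- A formula is valid iff it is valid at every base for every family of S5-modal relations. -/
def ValidAll {A : Type} (φ : Form A) : Prop :=
  ∀ R : A → Base → Base → Prop, (∀ a, S5Rel (R a)) → ∀ B : Base, Valid R B φ

/-!
Let `C ⊆ D`, with `K_a(φ → ψ)` valid at `C` and `K_a φ` valid at `D`, and let `E` be an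
`𝔯_a`-successor of `D`. If `E` is inconsistent, every formula is valid there. Otherwise the
zag condition gives an `𝔯_a`-successor `E'` of `C` with `E' ⊆ E`; `φ → ψ` is valid at `E'`,
hence applies at its extension `E`, where `φ` holds.
-/

theorem Deriv.mono {B C : Base} (h : B ⊆ C) {p : ℕ} (hd : Deriv B p) : Deriv C p := by
  induction hd with
  | step L p mem _ ih => exact Deriv.step L p (h mem) ih

theorem Inconsistent.mono {B C : Base} (h : B ⊆ C) (hB : Inconsistent B) : Inconsistent C :=
  fun p => (hB p).mono h

theorem Valid.of_inconsistent {A : Type} {R : A → Base → Base → Prop} (hR : ∀ a, S5Rel (R a))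
    (φ : Form A) {B : Base} (hB : Inconsistent B) : Valid R B φ := by
  induction φ generalizing B with
  | atom p => exact hB p
  | bot => exact hB
  | imp φ ψ _ ihψ => exact fun C hBC _ => ihψ (hB.mono hBC)
  | K a φ ih => exact fun C hBC => ih (((hR a).incon_succ B hB).2 C hBC)

theorem Valid.K_mp_of_subset {A : Type} {R : A → Base → Base → Prop} (hR : ∀ a, S5Rel (R a))
    {a : A} {φ ψ : Form A} {C D : Base} (hCD : C ⊆ D)
    (himp : Valid R C (.K a (φ.imp ψ))) (hφ : Valid R D (.K a φ)) : Valid R D (.K a ψ) := by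
  intro E hDE
  by_cases hE : Inconsistent E
  · exact Valid.of_inconsistent hR ψ hE
  · obtain ⟨E', hE'E, hCE'⟩ := (hR a).zag D E hDE hE C hCD
    exact himp E' hCE' E hE'E (hφ E hDE)

/-- Axiom K: K_a(φ→ψ) ⊩ K_aφ → K_aψ. -/
theorem stmt12 {A : Type} (a : A) (φ ψ : Form A) (R : A → Base → Base → Prop)
    (hR : ∀ a, S5Rel (R a)) (B : Base) :
    GammaValid R {Form.K a (φ.imp ψ)} B ((Form.K a φ).imp (Form.K a ψ)) :=
  fun _ _ hΓ _ hCD hφ => Valid.K_mp_of_subset hR hCD (hΓ _ rfl) hφ
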